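/- Let v > 0, R > 0, and let M ≥ 2 be an integer. Then for every nonempty finite set Γ ⊆ ℝ with |Γ| ≤ M − 1, ∫_ℝ (max_{γ∈Γ} g_R(x − γ)) · φ_v(x) dx ≤ f̄(M, R/v), where g_R(x) = min{1, R/x²} for x ≠ 0 and g_R(0) = 1. -/

import Mathlib

open Real MeasureTheory

/-- The error function `erf`. -/
noncomputable def erf (x : ℝ) : ℝ := (2 / Real.sqrt π) * ∫ t in (0:ℝ)..x, Real.exp (-t ^ 2)

/-- The complementary error function `erfc`. -/
noncomputable def erfc (x : ℝ) : ℝ := 1 - erf x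

/-- The bound `f̄(m, s)` from Theorem 2 of the paper. -/
noncomputable def fbar (m s : ℝ) : ℝ :=
  erf ((m - 1) * Real.sqrt s / Real.sqrt 2)
    + Real.sqrt (2 / π) * (m - 1) * Real.sqrt s * Real.exp (-((m - 1) ^ 2 * s) / 2)
    - (m - 1) ^ 2 * s * erfc ((m - 1) * Real.sqrt s / Real.sqrt 2)

/-- Density of a centered real Gaussian with variance `v`. -/
noncomputable def gaussDensity (v x : ℝ) : ℝ :=
  (Real.sqrt (2 * π * v))⁻¹ * Real.exp (-x ^ 2 / (2 * v))

/-- The Markov-bound function `g_R(x) = min {1, R/x²}` (with `g_R(0) = 1`). -/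
noncomputable def gfun (R x : ℝ) : ℝ := if x = 0 then 1 else min 1 (R / x ^ 2)

open Set

lemma gfun_nonneg {R : ℝ} (hR : 0 < R) (x : ℝ) : 0 ≤ gfun R x := by
  unfold gfun; split
  · norm_num
  · exact le_min zero_le_one (div_nonneg hR.le (sq_nonneg x))

lemma gfun_le_one {R : ℝ} (x : ℝ) : gfun R x ≤ 1 := by
  unfold gfun; split
  · exact le_rfl
  · exact min_le_left _ _

lemma measurable_gfun (R : ℝ) : Measurable (gfun R) := by
  unfold gfun
  exact Measurable.ite (measurableSet_singleton 0) measurable_const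
    (measurable_const.min ((measurable_const).div (measurable_id.pow_const 2)))

lemma gfun_lt_iff {R t : ℝ} (hR : 0 < R) (ht : 0 < t) (ht1 : t < 1) (y : ℝ) :
    t < gfun R y ↔ |y| < Real.sqrt (R / t) := by
  have hs : 0 < Real.sqrt (R / t) := Real.sqrt_pos.2 (div_pos hR ht)
  by_cases h : y = 0
  · simp [gfun, h, ht1, hs]
  · have hy2 : 0 < y ^ 2 := by positivity
    simp only [gfun, h, if_false, lt_min_iff, ht1, true_and]
    rw [lt_div_iff₀ hy2, mul_comm, ← lt_div_iff₀ ht, ← Real.sqrt_lt_sqrt_iff (sq_nonneg y),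
      Real.sqrt_sq_eq_abs]

lemma gaussDensity_pos {v : ℝ} (hv : 0 < v) (x : ℝ) : 0 < gaussDensity v x := by
  unfold gaussDensity
  positivity

lemma gaussDensity_anti {v : ℝ} (hv : 0 < v) {a b : ℝ} (h : |a| ≤ |b|) :
    gaussDensity v b ≤ gaussDensity v a := by
  unfold gaussDensity
  apply mul_le_mul_of_nonneg_left _ (by positivity)
  apply Real.exp_le_exp.2
  apply div_le_div_of_nonneg_right _ (by positivity)
  have : a ^ 2 ≤ b ^ 2 := by
    rw [← sq_abs a, ← sq_abs b]
    exact pow_le_pow_left₀ (abs_nonneg a) h 2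
  linarith

lemma measurable_gaussDensity (v : ℝ) : Measurable (gaussDensity v) := by
  unfold gaussDensity
  fun_prop

lemma integrable_gaussDensity {v : ℝ} (hv : 0 < v) : Integrable (gaussDensity v) := by
  unfold gaussDensity
  apply Integrable.const_mul
  have : ∀ x : ℝ, Real.exp (-x ^ 2 / (2 * v)) = Real.exp (-(1 / (2 * v)) * x ^ 2) := by
    intro x; ring_nf
  simp_rw [this]
  exact integrable_exp_neg_mul_sq (by positivity)

lemma integrable_expsq : Integrable (fun t : ℝ => Real.exp (-t ^ 2)) := by
  have : ∀ t : ℝ, Real.exp (-t ^ 2) = Real.exp (-(1:ℝ) * t ^ 2) := fun t => by norm_num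
  simp_rw [this]
  exact integrable_exp_neg_mul_sq one_pos

lemma integrable_expsq_v {v : ℝ} (hv : 0 < v) :
    Integrable (fun x : ℝ => Real.exp (-x ^ 2 / (2 * v))) := by
  have : ∀ x : ℝ, Real.exp (-x ^ 2 / (2 * v)) = Real.exp (-(1 / (2 * v)) * x ^ 2) := fun x => by
    ring_nf
  simp_rw [this]
  exact integrable_exp_neg_mul_sq (by positivity)

-- A: symmetric interval
lemma int_gauss_interval {v : ℝ} (hv : 0 < v) (a : ℝ) :
    ∫ x in (-a)..a, gaussDensity v x = erf (a / Real.sqrt (2 * v)) := by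
  have hs : (0:ℝ) < Real.sqrt (2 * v) := Real.sqrt_pos.2 (by positivity)
  set s := Real.sqrt (2 * v) with hsdef
  have hs2 : s ^ 2 = 2 * v := Real.sq_sqrt (by positivity)
  unfold gaussDensity
  rw [intervalIntegral.integral_const_mul]
  have h1 : ∀ x : ℝ, Real.exp (-x ^ 2 / (2 * v)) = Real.exp (-(x / s) ^ 2) := by
    intro x
    rw [div_pow, hs2]
    ring_nf
  simp_rw [h1]
  rw [intervalIntegral.integral_comp_div (fun t => Real.exp (-t ^ 2)) hs.ne']
  have h2 : ∫ t in (-a / s)..(a / s), Real.exp (-t ^ 2) =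
      2 * ∫ t in (0:ℝ)..(a / s), Real.exp (-t ^ 2) := by
    have hsplit : ∫ t in (-a / s)..(a / s), Real.exp (-t ^ 2) =
        (∫ t in (-a / s)..(0:ℝ), Real.exp (-t ^ 2)) + ∫ t in (0:ℝ)..(a / s), Real.exp (-t ^ 2) :=
      (intervalIntegral.integral_add_adjacent_intervals
        integrable_expsq.intervalIntegrable integrable_expsq.intervalIntegrable).symm
    have hneg : ∫ t in (-a / s)..(0:ℝ), Real.exp (-t ^ 2) =
        ∫ t in (0:ℝ)..(a / s), Real.exp (-t ^ 2) := by
      have h := intervalIntegral.integral_comp_neg (a := (0:ℝ)) (b := a / s)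
        (fun t => Real.exp (-t ^ 2))
      simp only [neg_sq, neg_zero] at h
      rw [neg_div]
      exact h.symm
    rw [hsplit, hneg]; ring
  rw [h2]
  unfold erf
  have hsπ : Real.sqrt (2 * π * v) = s * Real.sqrt π := by
    rw [hsdef, ← Real.sqrt_mul (by positivity)]
    ring_nf
  rw [hsπ]
  have hπ : (0:ℝ) < Real.sqrt π := Real.sqrt_pos.2 Real.pi_pos
  rw [smul_eq_mul]
  field_simp

-- D: tail substitution
lemma tail_subst {v : ℝ} (hv : 0 < v) (a : ℝ) :
    ∫ x in Ioi a, Real.exp (-x ^ 2 / (2 * v)) =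
      Real.sqrt (2 * v) * ∫ t in Ioi (a / Real.sqrt (2 * v)), Real.exp (-t ^ 2) := by
  have hs : (0:ℝ) < Real.sqrt (2 * v) := Real.sqrt_pos.2 (by positivity)
  set s := Real.sqrt (2 * v) with hsdef
  have hs2 : s ^ 2 = 2 * v := Real.sq_sqrt (by positivity)
  have h1 : ∀ x : ℝ, Real.exp (-x ^ 2 / (2 * v)) = Real.exp (-(s⁻¹ * x) ^ 2) := by
    intro x
    rw [mul_pow, ← hs2]
    congr 1
    field_simp
  simp_rw [h1]
  rw [integral_comp_mul_left_Ioi (fun t => Real.exp (-t ^ 2)) a (inv_pos.2 hs)]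
  rw [smul_eq_mul, inv_inv]
  congr 2
  field_simp

-- B: erfc tail
lemma erfc_half (y : ℝ) :
    Real.sqrt π / 2 * erfc y = Real.sqrt π / 2 - ∫ t in (0:ℝ)..y, Real.exp (-t ^ 2) := by
  have hπ : (0:ℝ) < Real.sqrt π := Real.sqrt_pos.2 Real.pi_pos
  unfold erfc erf
  field_simp

lemma erfc_tail (y : ℝ) :
    ∫ t in Ioi y, Real.exp (-t ^ 2) = Real.sqrt π / 2 * erfc y := by
  have htot : ∫ t in Ioi (0:ℝ), Real.exp (-t ^ 2) = Real.sqrt π / 2 := by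
    have := integral_gaussian_Ioi 1
    simp only [neg_mul, one_mul] at this
    rw [this, div_one]
  rw [erfc_half]
  by_cases hy : 0 ≤ y
  · have hsplit : (∫ t in Ioc (0:ℝ) y ∪ Ioi y, Real.exp (-t ^ 2)) =
        (∫ t in Ioc (0:ℝ) y, Real.exp (-t ^ 2)) + ∫ t in Ioi y, Real.exp (-t ^ 2) :=
      setIntegral_union (Ioc_disjoint_Ioi le_rfl) measurableSet_Ioi
        integrable_expsq.integrableOn integrable_expsq.integrableOn
    rw [Ioc_union_Ioi_eq_Ioi hy, htot, ← intervalIntegral.integral_of_le hy] at hsplit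
    linarith
  · push_neg at hy
    have hsplit : (∫ t in Ioc y (0:ℝ) ∪ Ioi (0:ℝ), Real.exp (-t ^ 2)) =
        (∫ t in Ioc y (0:ℝ), Real.exp (-t ^ 2)) + ∫ t in Ioi (0:ℝ), Real.exp (-t ^ 2) :=
      setIntegral_union (Ioc_disjoint_Ioi le_rfl) measurableSet_Ioi
        integrable_expsq.integrableOn integrable_expsq.integrableOn
    rw [Ioc_union_Ioi_eq_Ioi hy.le, htot, ← intervalIntegral.integral_of_le hy.le,
      intervalIntegral.integral_symm 0 y] at hsplit
    linarith

-- C: integration by parts on the tail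
lemma ibp_tail {v a : ℝ} (hv : 0 < v) (ha : 0 < a) :
    ∫ x in Ioi a, (x ^ 2)⁻¹ * Real.exp (-x ^ 2 / (2 * v)) =
      a⁻¹ * Real.exp (-a ^ 2 / (2 * v)) - (1 / v) * ∫ x in Ioi a, Real.exp (-x ^ 2 / (2 * v)) := by
  set F : ℝ → ℝ := fun x => -x⁻¹ * Real.exp (-x ^ 2 / (2 * v)) with hF
  set f' : ℝ → ℝ := fun x =>
    (x ^ 2)⁻¹ * Real.exp (-x ^ 2 / (2 * v)) + (1 / v) * Real.exp (-x ^ 2 / (2 * v)) with hf'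
  have hderiv : ∀ x ∈ Ici a, HasDerivAt F (f' x) x := by
    intro x hx
    have hx0 : x ≠ 0 := (lt_of_lt_of_le ha hx).ne'
    have h1 : HasDerivAt (fun y : ℝ => -y⁻¹) ((x ^ 2)⁻¹) x := by
      have h := (hasDerivAt_inv hx0).neg
      simp only [neg_neg] at h
      exact h
    have h2 : HasDerivAt (fun y : ℝ => Real.exp (-y ^ 2 / (2 * v)))
        ((-x / v) * Real.exp (-x ^ 2 / (2 * v))) x := by
      have hg : HasDerivAt (fun y : ℝ => -y ^ 2 / (2 * v)) (-x / v) x := by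
        have := ((hasDerivAt_pow 2 x).neg).div_const (2 * v)
        refine this.congr_deriv ?_
        field_simp
        ring
      simpa [mul_comm] using hg.exp
    have := h1.fun_mul h2
    refine this.congr_deriv ?_
    rw [hf']
    field_simp
  have htend : Filter.Tendsto F Filter.atTop (nhds 0) := by
    have T1 : Filter.Tendsto (fun x : ℝ => -x⁻¹) Filter.atTop (nhds 0) := by
      have h : Filter.Tendsto (fun x : ℝ => x⁻¹) Filter.atTop (nhds 0) := tendsto_inv_atTop_zero
      simpa using h.neg
    have T2 : Filter.Tendsto (fun x : ℝ => Real.exp (-x ^ 2 / (2 * v))) Filter.atTop (nhds 0) := by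
      apply Real.tendsto_exp_atBot.comp
      apply Filter.Tendsto.atBot_div_const (by positivity : (0:ℝ) < 2 * v)
      exact Filter.tendsto_neg_atTop_atBot.comp (Filter.tendsto_pow_atTop two_ne_zero)
    simpa [hF, neg_mul] using T1.mul T2
  have hI1 : IntegrableOn (fun x => (x ^ 2)⁻¹ * Real.exp (-x ^ 2 / (2 * v))) (Ioi a) := by
    apply Integrable.mono (g := fun x : ℝ => x ^ (-2 : ℝ))
      (integrableOn_Ioi_rpow_of_lt (by norm_num) ha)
    · apply Measurable.aestronglyMeasurable
      fun_prop
    · rw [ae_restrict_iff' measurableSet_Ioi]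
      apply ae_of_all
      intro x hx
      have hx0 : 0 < x := lt_trans ha hx
      rw [Real.norm_eq_abs, Real.norm_eq_abs, abs_of_nonneg (by positivity),
        abs_of_nonneg (Real.rpow_nonneg hx0.le _)]
      have hpow : x ^ (-2 : ℝ) = (x ^ 2)⁻¹ := by
        rw [← Real.rpow_natCast x 2, ← Real.rpow_neg hx0.le]
        norm_num
      rw [hpow]
      nth_rewrite 2 [← mul_one ((x ^ 2)⁻¹)]
      apply mul_le_mul_of_nonneg_left _ (by positivity)
      apply Real.exp_le_one_iff.2
      apply div_nonpos_of_nonpos_of_nonneg (by nlinarith [sq_nonneg x]) (by positivity)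
  have hI2 : IntegrableOn (fun x => (1 / v) * Real.exp (-x ^ 2 / (2 * v))) (Ioi a) :=
    ((integrable_expsq_v hv).integrableOn).const_mul _
  have hint : ∫ x in Ioi a, f' x = 0 - F a := by
    apply integral_Ioi_of_hasDerivAt_of_tendsto
      ((hderiv a (le_refl a)).continuousAt.continuousWithinAt)
      (fun x hx => hderiv x (mem_Ici.2 (le_of_lt hx)))
      (hI1.add hI2) htend
  rw [hf'] at hint
  rw [integral_add hI1 hI2, integral_const_mul] at hint
  rw [hF] at hint
  simp only [zero_sub, neg_mul, neg_neg] at hint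
  linarith

lemma gauss_rearrange {v : ℝ} (hv : 0 < v) {A : Set ℝ} (hA : MeasurableSet A) {s : ℝ}
    (hs : 0 ≤ s) (hvol : volume A ≤ volume (Metric.ball (0:ℝ) s)) :
    ∫⁻ x in A, ENNReal.ofReal (gaussDensity v x) ≤
      ∫⁻ x in Metric.ball (0:ℝ) s, ENNReal.ofReal (gaussDensity v x) := by
  set I := Metric.ball (0:ℝ) s with hI
  have hImeas : MeasurableSet I := measurableSet_ball
  have hIvol : volume I < ⊤ := by
    rw [Real.volume_ball]; exact ENNReal.ofReal_lt_top
  have hsplitA : ∫⁻ x in A, ENNReal.ofReal (gaussDensity v x) =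
      (∫⁻ x in A ∩ I, ENNReal.ofReal (gaussDensity v x)) +
      ∫⁻ x in A \ I, ENNReal.ofReal (gaussDensity v x) := by
    rw [← lintegral_inter_add_diff _ A hImeas]
  have hsplitI : ∫⁻ x in I, ENNReal.ofReal (gaussDensity v x) =
      (∫⁻ x in I ∩ A, ENNReal.ofReal (gaussDensity v x)) +
      ∫⁻ x in I \ A, ENNReal.ofReal (gaussDensity v x) := by
    rw [← lintegral_inter_add_diff _ I hA]
  have hvolle : volume (A \ I) ≤ volume (I \ A) := by
    have h1 : volume (A ∩ I) + volume (A \ I) = volume A := measure_inter_add_diff A hImeas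
    have h2 : volume (I ∩ A) + volume (I \ A) = volume I := measure_inter_add_diff I hA
    have hfin : volume (A ∩ I) < ⊤ := lt_of_le_of_lt (measure_mono inter_subset_right) hIvol
    rw [inter_comm] at h2
    have : volume (A ∩ I) + volume (A \ I) ≤ volume (A ∩ I) + volume (I \ A) := by
      rw [h1, h2]; exact hvol
    exact (ENNReal.add_le_add_iff_left hfin.ne).mp this
  have hout : ∫⁻ x in A \ I, ENNReal.ofReal (gaussDensity v x) ≤
      ENNReal.ofReal (gaussDensity v s) * volume (A \ I) := by
    calc ∫⁻ x in A \ I, ENNReal.ofReal (gaussDensity v x)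
        ≤ ∫⁻ _ in A \ I, ENNReal.ofReal (gaussDensity v s) := by
          apply setLIntegral_mono measurable_const ?_
          intro x hx
          apply ENNReal.ofReal_le_ofReal
          apply gaussDensity_anti hv
          have hxI : ¬ |x - 0| < s := by simpa [hI, Metric.mem_ball, Real.dist_eq] using hx.2
          rw [sub_zero] at hxI
          rw [abs_of_nonneg hs]
          exact not_lt.mp hxI
      _ = ENNReal.ofReal (gaussDensity v s) * volume (A \ I) := by
          rw [setLIntegral_const]
  have hin : ENNReal.ofReal (gaussDensity v s) * volume (I \ A) ≤
      ∫⁻ x in I \ A, ENNReal.ofReal (gaussDensity v x) := by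
    calc ENNReal.ofReal (gaussDensity v s) * volume (I \ A)
        = ∫⁻ _ in I \ A, ENNReal.ofReal (gaussDensity v s) := by rw [setLIntegral_const]
      _ ≤ ∫⁻ x in I \ A, ENNReal.ofReal (gaussDensity v x) := by
          apply setLIntegral_mono ((measurable_gaussDensity v).ennreal_ofReal) ?_
          intro x hx
          apply ENNReal.ofReal_le_ofReal
          apply gaussDensity_anti hv
          have hxI : |x - 0| < s := by simpa [hI, Metric.mem_ball, Real.dist_eq] using hx.1
          rw [sub_zero] at hxI
          rw [abs_of_nonneg hs]
          exact hxI.le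
  calc ∫⁻ x in A, ENNReal.ofReal (gaussDensity v x)
      = (∫⁻ x in A ∩ I, ENNReal.ofReal (gaussDensity v x)) +
        ∫⁻ x in A \ I, ENNReal.ofReal (gaussDensity v x) := hsplitA
    _ ≤ (∫⁻ x in A ∩ I, ENNReal.ofReal (gaussDensity v x)) +
        ENNReal.ofReal (gaussDensity v s) * volume (I \ A) := by
        gcongr
        exact hout.trans (by gcongr)
    _ ≤ (∫⁻ x in A ∩ I, ENNReal.ofReal (gaussDensity v x)) +
        ∫⁻ x in I \ A, ENNReal.ofReal (gaussDensity v x) := by gcongr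
    _ = ∫⁻ x in I, ENNReal.ofReal (gaussDensity v x) := by rw [hsplitI, inter_comm]

lemma lintegral_comp (v R : ℝ) (hv : 0 < v) (hR : 0 < R)
    (M : ℕ) (hM : 2 ≤ M) (Γ : Finset ℝ) (hΓ : Γ.Nonempty) (hcard : Γ.card ≤ M - 1) :
    ∫⁻ x, ENNReal.ofReal ((Γ.sup' hΓ fun γ => gfun R (x - γ)) * gaussDensity v x) ≤
    ∫⁻ x, ENNReal.ofReal (gfun (((M:ℝ) - 1) ^ 2 * R) x * gaussDensity v x) := by
  set c : ℝ := (M:ℝ) - 1 with hc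
  have hc1 : 1 ≤ c := by
    have : (2:ℝ) ≤ (M:ℝ) := by exact_mod_cast hM
    simp [hc]; linarith
  have hc0 : 0 < c := lt_of_lt_of_le one_pos hc1
  have hR' : 0 < c ^ 2 * R := by positivity
  set h : ℝ → ℝ := fun x => Γ.sup' hΓ fun γ => gfun R (x - γ) with hh
  set g2 : ℝ → ℝ := fun x => gfun (c ^ 2 * R) x with hg2
  have hmeas_h : Measurable h := by
    have h1 : Measurable (Γ.sup' hΓ (fun (γ : ℝ) (x : ℝ) => gfun R (x - γ))) :=
      Finset.measurable_sup' hΓ (fun γ _ => (measurable_gfun R).comp (measurable_id.sub_const γ))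
    have h2 : h = Γ.sup' hΓ (fun (γ : ℝ) (x : ℝ) => gfun R (x - γ)) := by
      funext x
      rw [hh, Finset.sup'_apply]
    rw [h2]; exact h1
  have hmeas_g2 : Measurable g2 := measurable_gfun _
  have h_nn : ∀ x, 0 ≤ h x := fun x => by
    obtain ⟨γ, hγ⟩ := hΓ
    exact le_trans (gfun_nonneg hR (x - γ)) (Finset.le_sup' (fun γ => gfun R (x - γ)) hγ)
  have h_le_one : ∀ x, h x ≤ 1 := fun x => Finset.sup'_le _ _ fun γ _ => gfun_le_one _
  have g2_nn : ∀ x, 0 ≤ g2 x := fun x => gfun_nonneg hR' x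
  -- pass to withDensity measure
  set ν : Measure ℝ := volume.withDensity (fun x => ENNReal.ofReal (gaussDensity v x)) with hν
  have hwd : ∀ (f : ℝ → ℝ), Measurable f → (∀ x, 0 ≤ f x) →
      ∫⁻ x, ENNReal.ofReal (f x * gaussDensity v x) = ∫⁻ x, ENNReal.ofReal (f x) ∂ν := by
    intro f hf hf0
    rw [hν, lintegral_withDensity_eq_lintegral_mul _ (measurable_gaussDensity v).ennreal_ofReal
      hf.ennreal_ofReal]
    congr 1
    ext x
    simp only [Pi.mul_apply]
    rw [← ENNReal.ofReal_mul (le_of_lt (gaussDensity_pos hv x)), mul_comm]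
  rw [hwd h hmeas_h h_nn, hwd g2 hmeas_g2 g2_nn]
  rw [lintegral_eq_lintegral_meas_lt ν (ae_of_all _ h_nn) hmeas_h.aemeasurable,
    lintegral_eq_lintegral_meas_lt ν (ae_of_all _ g2_nn) hmeas_g2.aemeasurable]
  apply lintegral_mono_ae
  rw [ae_restrict_iff' measurableSet_Ioi]
  apply ae_of_all
  intro t ht
  rw [mem_Ioi] at ht
  by_cases ht1 : 1 ≤ t
  · have : {a : ℝ | t < h a} = ∅ := by
      ext x; simp only [mem_setOf_eq, mem_empty_iff_false, iff_false, not_lt]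
      exact (h_le_one x).trans ht1
    simp [this]
  push_neg at ht1
  set r : ℝ := Real.sqrt (R / t) with hr
  have hr0 : 0 < r := Real.sqrt_pos.2 (div_pos hR ht)
  have hseth : {a : ℝ | t < h a} = ⋃ γ ∈ Γ, Metric.ball γ r := by
    ext x
    simp only [mem_setOf_eq, hh, Finset.lt_sup'_iff, mem_iUnion, Metric.mem_ball,
      Real.dist_eq, exists_prop]
    constructor
    · rintro ⟨γ, hγ, hlt⟩
      exact ⟨γ, hγ, (gfun_lt_iff hR ht ht1 _).mp hlt⟩
    · rintro ⟨γ, hγ, hlt⟩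
      exact ⟨γ, hγ, (gfun_lt_iff hR ht ht1 _).mpr hlt⟩
  have hsetg : {a : ℝ | t < g2 a} = Metric.ball (0:ℝ) (c * r) := by
    ext x
    simp only [mem_setOf_eq, hg2, Metric.mem_ball, Real.dist_eq, sub_zero]
    rw [gfun_lt_iff hR' ht ht1]
    have : Real.sqrt (c ^ 2 * R / t) = c * r := by
      rw [mul_div_assoc, Real.sqrt_mul (by positivity), Real.sqrt_sq hc0.le, hr]
    rw [this]
  have hmeas_seth : MeasurableSet {a : ℝ | t < h a} := measurableSet_lt measurable_const hmeas_h
  have hvol : volume {a : ℝ | t < h a} ≤ volume (Metric.ball (0:ℝ) (c * r)) := by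
    rw [hseth, Real.volume_ball]
    calc volume (⋃ γ ∈ Γ, Metric.ball γ r) ≤ ∑ γ ∈ Γ, volume (Metric.ball γ r) :=
          measure_biUnion_finset_le Γ _
      _ = Γ.card * ENNReal.ofReal (2 * r) := by
          simp only [Real.volume_ball]
          rw [Finset.sum_const, nsmul_eq_mul]
      _ ≤ (M - 1 : ℕ) * ENNReal.ofReal (2 * r) := by
          exact mul_le_mul_left (by exact_mod_cast hcard) _
      _ = ENNReal.ofReal (2 * (c * r)) := by
          rw [← ENNReal.ofReal_natCast, ← ENNReal.ofReal_mul (by positivity)]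
          congr 1
          have hcc : ((M - 1 : ℕ) : ℝ) = c := by
            rw [hc, Nat.cast_sub (by omega)]; norm_num
          rw [hcc]; ring
  rw [hν, withDensity_apply _ hmeas_seth, withDensity_apply _ (by rw [hsetg]; exact measurableSet_ball)]
  rw [hsetg]
  exact gauss_rearrange hv hmeas_seth (by positivity) hvol

lemma gfun_even (R x : ℝ) : gfun R (-x) = gfun R x := by
  unfold gfun
  simp [neg_eq_zero]

lemma gaussDensity_even (v x : ℝ) : gaussDensity v (-x) = gaussDensity v x := by
  unfold gaussDensity
  simp

lemma integrable_gfun_gauss {v W : ℝ} (hv : 0 < v) (hW : 0 < W) :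
    Integrable (fun x => gfun W x * gaussDensity v x) := by
  apply (integrable_gaussDensity hv).mono
    (((measurable_gfun W).mul (measurable_gaussDensity v)).aestronglyMeasurable)
  apply ae_of_all
  intro x
  rw [Real.norm_eq_abs, Real.norm_eq_abs, Pi.mul_apply,
    abs_of_nonneg (mul_nonneg (gfun_nonneg hW x) (gaussDensity_pos hv x).le),
    abs_of_nonneg (gaussDensity_pos hv x).le]
  nth_rewrite 2 [← one_mul (gaussDensity v x)]
  exact mul_le_mul_of_nonneg_right (gfun_le_one x) (gaussDensity_pos hv x).le

lemma integral_gfun_gauss {v W : ℝ} (hv : 0 < v) (hW : 0 < W) :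
    ∫ x, gfun W x * gaussDensity v x =
      erf (Real.sqrt W / Real.sqrt (2 * v))
      + Real.sqrt (2 / π) * (Real.sqrt W / Real.sqrt v) * Real.exp (-W / (2 * v))
      - (W / v) * erfc (Real.sqrt W / Real.sqrt (2 * v)) := by
  set a := Real.sqrt W with hadef
  have ha : 0 < a := Real.sqrt_pos.2 hW
  have ha2 : a ^ 2 = W := Real.sq_sqrt hW.le
  set G : ℝ → ℝ := fun x => gfun W x * gaussDensity v x with hG
  have Ig : Integrable G := integrable_gfun_gauss hv hW
  -- splits
  have hsplit1 : ∫ x, G x = (∫ x in Iic (-a), G x) + ∫ x in Ioi (-a), G x :=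
    (intervalIntegral.integral_Iic_add_Ioi Ig.integrableOn Ig.integrableOn).symm
  have hsplit2 : ∫ x in Ioi (-a), G x = (∫ x in Ioc (-a) a, G x) + ∫ x in Ioi a, G x := by
    have h := setIntegral_union (Ioc_disjoint_Ioi (le_refl a)) measurableSet_Ioi
      (Ig.integrableOn (s := Ioc (-a) a)) (Ig.integrableOn (s := Ioi a))
    rwa [Ioc_union_Ioi_eq_Ioi (neg_le_self ha.le)] at h
  -- symmetric piece
  have hneg : ∫ x in Iic (-a), G x = ∫ x in Ioi a, G x := by
    rw [← integral_comp_neg_Ioi]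
    congr 1
    funext x
    rw [hG]
    simp only [gfun_even, gaussDensity_even]
  -- middle piece
  have hmid : ∫ x in Ioc (-a) a, G x = erf (a / Real.sqrt (2 * v)) := by
    have hcongr : ∫ x in Ioc (-a) a, G x = ∫ x in Ioc (-a) a, gaussDensity v x := by
      apply setIntegral_congr_fun measurableSet_Ioc
      intro x hx
      rw [hG]
      simp only
      have h1 : gfun W x = 1 := by
        unfold gfun
        split
        · rfl
        · apply min_eq_left
          rw [le_div_iff₀ (by positivity)]
          have : x ^ 2 ≤ a ^ 2 := sq_le_sq' hx.1.le hx.2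
          rw [ha2] at this
          linarith
      rw [h1, one_mul]
    rw [hcongr, ← intervalIntegral.integral_of_le (neg_le_self ha.le)]
    exact int_gauss_interval hv a
  -- tail piece
  have htail : ∫ x in Ioi a, G x =
      (W * (Real.sqrt (2 * π * v))⁻¹) *
        (a⁻¹ * Real.exp (-a ^ 2 / (2 * v))
          - (1 / v) * (Real.sqrt (2 * v) * (Real.sqrt π / 2 * erfc (a / Real.sqrt (2 * v))))) := by
    have hcongr : ∫ x in Ioi a, G x =
        ∫ x in Ioi a, (W * (Real.sqrt (2 * π * v))⁻¹) * ((x ^ 2)⁻¹ * Real.exp (-x ^ 2 / (2 * v))) := by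
      apply setIntegral_congr_fun measurableSet_Ioi
      intro x hx
      rw [hG]
      simp only
      rw [mem_Ioi] at hx
      have hx0 : 0 < x := lt_trans ha hx
      have hgf : gfun W x = W / x ^ 2 := by
        unfold gfun
        rw [if_neg hx0.ne']
        apply min_eq_right
        rw [div_le_one (by positivity), ← ha2]
        nlinarith
      rw [hgf]
      unfold gaussDensity
      field_simp
    rw [hcongr, integral_const_mul, ibp_tail hv ha, tail_subst hv a, erfc_tail]
  -- assemble
  rw [hsplit1, hsplit2, hneg, hmid, htail, ha2]
  set y := a / Real.sqrt (2 * v) with hy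
  set p := Real.sqrt π with hp
  set q := Real.sqrt 2 with hq
  set u := Real.sqrt v with hu
  have hp0 : 0 < p := Real.sqrt_pos.2 Real.pi_pos
  have hq0 : 0 < q := Real.sqrt_pos.2 two_pos
  have hu0 : 0 < u := Real.sqrt_pos.2 hv
  have hq2 : q ^ 2 = 2 := Real.sq_sqrt (by norm_num)
  have hu2 : u ^ 2 = v := Real.sq_sqrt hv.le
  have hs : Real.sqrt (2 * v) = q * u := by rw [hq, hu, ← Real.sqrt_mul (by norm_num)]
  have hsπ : Real.sqrt (2 * π * v) = q * u * p := by
    rw [hp, ← hs, ← Real.sqrt_mul (by positivity)]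
    ring_nf
  have h2π : Real.sqrt (2 / π) = q / p := by
    rw [hq, hp, ← Real.sqrt_div' 2 Real.pi_pos.le]
  rw [hsπ, h2π, hs]
  have hE : Real.exp (-W / (2 * v)) = Real.exp (-a ^ 2 / (2 * v)) := by rw [ha2]
  rw [hE, ← ha2]
  have e1 : 2 * (a ^ 2 * (q * u * p)⁻¹ * a⁻¹) = q / p * (a / u) := by
    field_simp
    linear_combination (-1 : ℝ) * hq2
  have e2 : 2 * (a ^ 2 * (q * u * p)⁻¹) * (1 / v * (q * u * (p / 2))) = a ^ 2 / v := by
    field_simp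
  linear_combination Real.exp (-a ^ 2 / (2 * v)) * e1 - erfc y * e2

/-- the integral of the maximal translate of the Markov-bound function against a
Gaussian density is at most `f̄(M, R/v)`. -/
theorem integral_max_translates_le_fbar (v R : ℝ) (hv : 0 < v) (hR : 0 < R)
    (M : ℕ) (hM : 2 ≤ M) (Γ : Finset ℝ) (hΓ : Γ.Nonempty) (hcard : Γ.card ≤ M - 1) :
    ∫ x : ℝ, (Γ.sup' hΓ fun γ => gfun R (x - γ)) * gaussDensity v x ≤ fbar M (R / v) := by
  set c : ℝ := (M:ℝ) - 1 with hc
  have hc1 : 1 ≤ c := by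
    have : (2:ℝ) ≤ (M:ℝ) := by exact_mod_cast hM
    rw [hc]; linarith
  have hc0 : 0 < c := lt_of_lt_of_le one_pos hc1
  set W : ℝ := c ^ 2 * R with hWdef
  have hW : 0 < W := by positivity
  set h : ℝ → ℝ := fun x => Γ.sup' hΓ fun γ => gfun R (x - γ) with hh
  have hmeas_h : Measurable h := by
    have h1 : Measurable (Γ.sup' hΓ (fun (γ : ℝ) (x : ℝ) => gfun R (x - γ))) :=
      Finset.measurable_sup' hΓ (fun γ _ => (measurable_gfun R).comp (measurable_id.sub_const γ))
    have h2 : h = Γ.sup' hΓ (fun (γ : ℝ) (x : ℝ) => gfun R (x - γ)) := by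
      funext x
      rw [hh, Finset.sup'_apply]
    rw [h2]; exact h1
  have h_nn : ∀ x, 0 ≤ h x := fun x => by
    obtain ⟨γ, hγ⟩ := hΓ
    exact le_trans (gfun_nonneg hR (x - γ)) (Finset.le_sup' (fun γ => gfun R (x - γ)) hγ)
  have hg2_nn : ∀ x, 0 ≤ gfun W x * gaussDensity v x := fun x =>
    mul_nonneg (gfun_nonneg hW x) (gaussDensity_pos hv x).le
  have Ig2 : Integrable (fun x => gfun W x * gaussDensity v x) := integrable_gfun_gauss hv hW
  -- step 1 : LHS as toReal of lintegral
  have step1 : ∫ x : ℝ, h x * gaussDensity v x =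
      (∫⁻ x, ENNReal.ofReal (h x * gaussDensity v x)).toReal := by
    rw [integral_eq_lintegral_of_nonneg_ae
      (ae_of_all _ (fun x => mul_nonneg (h_nn x) (gaussDensity_pos hv x).le))
      ((hmeas_h.mul (measurable_gaussDensity v)).aestronglyMeasurable)]
  -- step 3 : RHS lintegral equals ofReal of integral
  have step3 : ∫⁻ x, ENNReal.ofReal (gfun W x * gaussDensity v x) =
      ENNReal.ofReal (∫ x, gfun W x * gaussDensity v x) :=
    (ofReal_integral_eq_lintegral_ofReal Ig2 (ae_of_all _ hg2_nn)).symm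
  -- step 4 : closed form and fbar matching
  have hRv : Real.sqrt (R / v) = Real.sqrt R / Real.sqrt v := by
    rw [Real.sqrt_div hR.le]
  have hsqW : Real.sqrt W = c * Real.sqrt R := by
    rw [hWdef, Real.sqrt_mul (sq_nonneg c), Real.sqrt_sq hc0.le]
  have h2v : Real.sqrt (2 * v) = Real.sqrt 2 * Real.sqrt v := by
    rw [← Real.sqrt_mul (by norm_num)]
  have hv0 : Real.sqrt v ≠ 0 := (Real.sqrt_pos.2 hv).ne'
  have h20 : Real.sqrt 2 ≠ 0 := (Real.sqrt_pos.2 two_pos).ne'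
  have harg : c * Real.sqrt (R / v) / Real.sqrt 2 = Real.sqrt W / Real.sqrt (2 * v) := by
    rw [hRv, hsqW, h2v]
    field_simp
  have hcv : c * Real.sqrt (R / v) = Real.sqrt W / Real.sqrt v := by
    rw [hRv, hsqW]
    field_simp
  have hexp : -(c ^ 2 * (R / v)) / 2 = -W / (2 * v) := by
    rw [hWdef]; field_simp
  have hW2 : c ^ 2 * (R / v) = W / v := by
    rw [hWdef]; field_simp
  have step4 : ∫ x, gfun W x * gaussDensity v x = fbar M (R / v) := by
    rw [integral_gfun_gauss hv hW]
    unfold fbar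
    rw [← hc, harg, hexp, hW2]
    linear_combination (-(Real.sqrt (2 / π) * Real.exp (-W / (2 * v)))) * hcv
  -- finish
  rw [show (∫ x : ℝ, (Γ.sup' hΓ fun γ => gfun R (x - γ)) * gaussDensity v x)
      = ∫ x : ℝ, h x * gaussDensity v x from rfl, step1, ← step4]
  have hmono := lintegral_comp v R hv hR M hM Γ hΓ hcard
  rw [← hc, ← hWdef] at hmono
  calc (∫⁻ x, ENNReal.ofReal (h x * gaussDensity v x)).toReal
      ≤ (∫⁻ x, ENNReal.ofReal (gfun W x * gaussDensity v x)).toReal := by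
        apply ENNReal.toReal_mono _ hmono
        rw [step3]
        exact ENNReal.ofReal_ne_top
    _ = ∫ x, gfun W x * gaussDensity v x := by
        rw [step3, ENNReal.toReal_ofReal (integral_nonneg hg2_nn)]
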